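/- arXiv:1002.1979 — 3 statements merged into one kernel-verified Lean document; each statement's English description precedes it below -/
import Mathlib

section
/- Let γ₀(t) = z₀ + k₁t + √(t/t̂_c)(z_c − z₀ − k₁ t̂_c) and γ₁(t) = z₀ − k₁t + 2√((1−z₀)k₁t). If t* = (1/k₁)(1 + 2√(z₀(1−z₀))) and t̂_c = (1/k₁)(√z₀ + √z_c)², then γ₁(t*) = 1 − z₀ and γ₀(t*) = 1 − z₀. -/
/-! Write `a = √z₀`, `s = √(1 − z₀)`, `b = √z_c`, so that `a² + s² = 1`. Then
`1 + 2√(z₀(1 − z₀)) = (a + s)²`, hence `k₁t* = (a + s)²` and `k₁t̂_c = (a + b)²`. At `t*` every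
square root becomes a polynomial in `a, s, b`: `√((1 − z₀)k₁t*) = s(a + s)`,
`√(t*/t̂_c) = (a + s)/(a + b)` and `z_c − z₀ − k₁t̂_c = −2a(a + b)`, after which both identities
reduce to `a² + s² = 1`. -/

open Real

noncomputable def meetingTime (k z : ℝ) : ℝ := (√z + √(1 - z)) ^ 2 / k

noncomputable def crossingTime (k z zc : ℝ) : ℝ := (√z + √zc) ^ 2 / k

section

variable {k z zc : ℝ}

theorem one_add_two_sqrt_mul_one_sub (hz0 : 0 ≤ z) (hz1 : z ≤ 1) :
    1 + 2 * √(z * (1 - z)) = (√z + √(1 - z)) ^ 2 := by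
  rw [sqrt_mul hz0, add_sq, sq_sqrt hz0, sq_sqrt (sub_nonneg.2 hz1)]
  ring

theorem meetingTime_eq (hz0 : 0 ≤ z) (hz1 : z ≤ 1) :
    meetingTime k z = 1 / k * (1 + 2 * √(z * (1 - z))) := by
  rw [meetingTime, one_add_two_sqrt_mul_one_sub hz0 hz1, one_div_mul_eq_div]

theorem upperShock_at_meetingTime (hk : 0 < k) (hz0 : 0 ≤ z) (hz1 : z ≤ 1) :
    z - k * meetingTime k z + 2 * √((1 - z) * k * meetingTime k z) = 1 - z := by
  have ha := sq_sqrt hz0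
  have hs := sq_sqrt (sub_nonneg.2 hz1)
  have hkt : k * meetingTime k z = (√z + √(1 - z)) ^ 2 := by
    rw [meetingTime]; field_simp
  have hroot : √((1 - z) * k * meetingTime k z) = √(1 - z) * (√z + √(1 - z)) := by
    rw [mul_assoc, hkt, ← hs, ← mul_pow, hs, sqrt_sq (by positivity)]
  rw [hkt, hroot]
  linear_combination hs - ha

theorem lowerShock_at_meetingTime (hk : 0 < k) (hz0 : 0 ≤ z) (hz1 : z ≤ 1) (hzc : 0 < zc) :
    z + k * meetingTime k z
        + √(meetingTime k z / crossingTime k z zc) * (zc - z - k * crossingTime k z zc)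
      = 1 - z := by
  have ha := sq_sqrt hz0
  have hb := sq_sqrt hzc.le
  have hs := sq_sqrt (sub_nonneg.2 hz1)
  have hab : 0 < √z + √zc := add_pos_of_nonneg_of_pos (sqrt_nonneg z) (sqrt_pos.2 hzc)
  have hkt : k * meetingTime k z = (√z + √(1 - z)) ^ 2 := by
    rw [meetingTime]; field_simp
  have hratio : √(meetingTime k z / crossingTime k z zc) = (√z + √(1 - z)) / (√z + √zc) := by
    rw [meetingTime, crossingTime, div_div_div_cancel_right₀ hk.ne', ← div_pow,
      sqrt_sq (by positivity)]
  have hgap : zc - z - k * crossingTime k z zc = -2 * √z * (√z + √zc) := by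
    rw [crossingTime]; field_simp; linear_combination ha - hb
  rw [hkt, hratio, hgap, div_mul_eq_mul_div, mul_div_assoc,
    mul_div_cancel_right₀ _ hab.ne']
  linear_combination hs - ha

end

/-- With `γ₀(t) = z₀ + k₁t + √(t/t̂_c)(z_c − z₀ − k₁ t̂_c)` and
`γ₁(t) = z₀ − k₁t + 2√((1−z₀)k₁t)`, if `t* = (1/k₁)(1 + 2√(z₀(1−z₀)))` and
`t̂_c = (1/k₁)(√z₀ + √z_c)²`, then `γ₁(t*) = 1 − z₀` and `γ₀(t*) = 1 − z₀`. -/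
theorem stmt10 (k₁ z₀ zc : ℝ) (hk₁ : 0 < k₁) (hzc : 0 < zc) (hzcz₀ : zc < z₀)
    (hz₀ : z₀ ≤ 1 / 2)
    (tstar thc : ℝ)
    (htstar : tstar = (1 / k₁) * (1 + 2 * Real.sqrt (z₀ * (1 - z₀))))
    (hthc : thc = (1 / k₁) * (Real.sqrt z₀ + Real.sqrt zc) ^ 2)
    (γ₀ γ₁ : ℝ → ℝ)
    (hγ₀ : ∀ t, γ₀ t = z₀ + k₁ * t + Real.sqrt (t / thc) * (zc - z₀ - k₁ * thc))
    (hγ₁ : ∀ t, γ₁ t = z₀ - k₁ * t + 2 * Real.sqrt ((1 - z₀) * k₁ * t)) :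
    γ₁ tstar = 1 - z₀ ∧ γ₀ tstar = 1 - z₀ := by
  have hz0 : 0 ≤ z₀ := hzc.le.trans hzcz₀.le
  have hz1 : z₀ ≤ 1 := by linarith
  have htstar' : tstar = meetingTime k₁ z₀ := by rw [htstar, meetingTime_eq hz0 hz1]
  have hthc' : thc = crossingTime k₁ z₀ zc := by rw [hthc, crossingTime, one_div_mul_eq_div]
  rw [hγ₁, hγ₀, htstar', hthc']
  exact ⟨upperShock_at_meetingTime hk₁ hz0 hz1,
    lowerShock_at_meetingTime hk₁ hz0 hz1 hzc⟩
end

section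
/- With a(z) = a₀e^{−z/λ} and f(φ) = φ(φ−1), the solution of dφ/dt = −(a₀/λ)φ₀(1−φ₀)e^{−z₀/λ}, φ(0) = φ₀, combined with dz/dt = a₀e^{−z/λ}(2φ(t)−1), z(0) = z₀, satisfies e^{z(t)/λ} − e^{z₀/λ} = (a₀/λ)(𝒫t² + (2φ₀−1)t), where 𝒫 = −(a₀/λ)φ₀(1−φ₀)e^{−z₀/λ}. -/
/-! Multiplying `dz/dt = a₀ e^{-z/λ} g(t)` by `e^{z/λ}/λ` turns it into `d/dt e^{z/λ} = (a₀/λ) g(t)`,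
so `e^{z/λ}` differs from `(a₀/λ) G` by a constant for any antiderivative `G` of `g`. With the linear
characteristic `φ(t) = 𝒫t + φ₀`, `g = 2φ - 1` has the antiderivative `𝒫t² + (2φ₀ - 1)t`. -/

open Real Set

theorem hasDerivAt_exp_div_of_hasDerivAt_mul_exp_neg_div {z g : ℝ → ℝ} {a c t : ℝ}
    (hz : HasDerivAt z (a * exp (-z t / c) * g t) t) :
    HasDerivAt (fun s => exp (z s / c)) (a / c * g t) t := by
  convert (hz.div_const c).exp using 1
  have hcancel : exp (z t / c) * exp (-z t / c) = 1 := by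
    rw [← exp_add, ← add_div, add_neg_cancel, zero_div, exp_zero]
  calc a / c * g t = exp (z t / c) * exp (-z t / c) * (a / c * g t) := by rw [hcancel, one_mul]
    _ = exp (z t / c) * (a * exp (-z t / c) * g t / c) := by ring

theorem exp_div_sub_exp_div_eq_of_hasDerivAt_mul_exp_neg_div {z g G : ℝ → ℝ} {a c T : ℝ}
    (hz : ∀ t ∈ Icc 0 T, HasDerivAt z (a * exp (-z t / c) * g t) t)
    (hG : ∀ t, HasDerivAt G (g t) t) :
    ∀ t ∈ Icc 0 T, exp (z t / c) - exp (z 0 / c) = a / c * (G t - G 0) := by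
  have hF : ∀ t ∈ Icc 0 T, HasDerivAt (fun s => exp (z s / c)) (a / c * g t) t := fun t ht =>
    hasDerivAt_exp_div_of_hasDerivAt_mul_exp_neg_div (hz t ht)
  have hH : ∀ t, HasDerivAt (fun s => exp (z 0 / c) + a / c * (G s - G 0)) (a / c * g t) t :=
    fun t => (((hG t).sub_const (G 0)).const_mul (a / c)).const_add _
  intro t ht
  have key := eq_of_has_deriv_right_eq (a := 0) (b := T)
    (fun s hs => (hF s (Ico_subset_Icc_self hs)).hasDerivWithinAt)
    (fun s _ => (hH s).hasDerivWithinAt)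
    (fun s hs => (hF s hs).continuousAt.continuousWithinAt)
    (fun s _ => (hH s).continuousAt.continuousWithinAt)
    (by simp) t ht
  linarith

theorem hasDerivAt_mul_sq_add_mul (P φ₀ t : ℝ) :
    HasDerivAt (fun s => P * s ^ 2 + (2 * φ₀ - 1) * s) (2 * (P * t + φ₀) - 1) t :=
  (((hasDerivAt_pow 2 t).const_mul P).add ((hasDerivAt_id' t).const_mul (2 * φ₀ - 1))).congr_deriv
    (by push_cast; ring)

theorem stmt14_general (a₀ lam z₀ φ₀ T : ℝ)
    (P : ℝ)
    (z : ℝ → ℝ) (hz0 : z 0 = z₀)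
    (hzode : ∀ t ∈ Set.Icc (0 : ℝ) T,
      HasDerivAt z (a₀ * Real.exp (-(z t) / lam) * (2 * (P * t + φ₀) - 1)) t) :
    ∀ t ∈ Set.Icc (0 : ℝ) T,
      Real.exp (z t / lam) - Real.exp (z₀ / lam) =
        (a₀ / lam) * (P * t ^ 2 + (2 * φ₀ - 1) * t) := by
  intro t ht
  have h := exp_div_sub_exp_div_eq_of_hasDerivAt_mul_exp_neg_div hzode
    (hasDerivAt_mul_sq_add_mul P φ₀) t ht
  simpa [hz0] using h

/-- With `a(z) = a₀e^{−z/λ}` and `f(φ) = φ(φ−1)`, the linear characteristic value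
`φ(t) = 𝒫t + φ₀` with `𝒫 = −(a₀/λ)φ₀(1−φ₀)e^{−z₀/λ}`, combined with
`dz/dt = a₀e^{−z/λ}(2φ(t)−1)`, `z(0) = z₀`, satisfies
`e^{z(t)/λ} − e^{z₀/λ} = (a₀/λ)(𝒫t² + (2φ₀−1)t)`. -/
theorem stmt14 (a₀ lam z₀ φ₀ T : ℝ) (ha₀ : 0 < a₀) (hlam : 0 < lam)
    (hφ₀ : φ₀ ∈ Set.Icc (0 : ℝ) 1) (hT : 0 < T)
    (P : ℝ) (hP : P = -(a₀ / lam) * φ₀ * (1 - φ₀) * Real.exp (-z₀ / lam))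
    (z : ℝ → ℝ) (hz0 : z 0 = z₀)
    (hzode : ∀ t ∈ Set.Icc (0 : ℝ) T,
      HasDerivAt z (a₀ * Real.exp (-(z t) / lam) * (2 * (P * t + φ₀) - 1)) t) :
    ∀ t ∈ Set.Icc (0 : ℝ) T,
      Real.exp (z t / lam) - Real.exp (z₀ / lam) =
        (a₀ / lam) * (P * t ^ 2 + (2 * φ₀ - 1) * t) :=
  stmt14_general a₀ lam z₀ φ₀ T P z hz0 hzode
end

section
/- For t > 0 and z, z₀ ∈ ℝ with parameters a₀, λ > 0, the value φ₀(z,t) = (λ/(2a₀t))( a₀t/λ − 2e^{z₀/λ} + √(4e^{(z+z₀)/λ} + (a₀t/λ)²) ) satisfies the quadratic relation e^{z/λ} − e^{z₀/λ} = (a₀/λ)( −(a₀/λ)φ₀(1−φ₀)e^{−z₀/λ} t² + (2φ₀−1)t ), and φ₀(z_max(t), t) = 1 whenever e^{z_max(t)/λ} = e^{z₀/λ} + (a₀/λ)t. -/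
/-!
Write `E = e^{z₀/λ}`, `X = e^{z/λ}`, `s = a₀t/λ` and `u = sφ₀`. Multiplied by `E`, the
characteristic relation becomes the quadratic `u² + (2E − s)u = E(X − E + s)`, whose discriminant
is `s² + 4EX`; the given `φ₀` is its larger root divided by `s`. On the leading characteristic
`X = E + s` the discriminant is the perfect square `(2E + s)²`, so the root is `u = s`, i.e. `φ₀ = 1`.
-/

/-- The paper's `φ₀(z,t)` in the variables `E = e^{z₀/λ}`, `X = e^{z/λ}`, `s = a₀t/λ`. -/
noncomputable def fanInitialDatum (E X s : ℝ) : ℝ :=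
  (s - 2 * E + √(4 * X * E + s ^ 2)) / (2 * s)

lemma fanInitialDatum_solves_characteristic {E X s : ℝ} (hE : 0 < E) (hX : 0 ≤ X) (hs : s ≠ 0) :
    X - E = -s ^ 2 * fanInitialDatum E X s * (1 - fanInitialDatum E X s) / E +
      (2 * fanInitialDatum E X s - 1) * s := by
  have hroot := Real.sq_sqrt (by positivity : 0 ≤ 4 * X * E + s ^ 2)
  unfold fanInitialDatum
  set R := √(4 * X * E + s ^ 2)
  field_simp
  linear_combination -hroot

lemma fanInitialDatum_add_self {E s : ℝ} (hE : 0 < E) (hs : 0 < s) :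
    fanInitialDatum E (E + s) s = 1 := by
  have hsquare : 4 * (E + s) * E + s ^ 2 = (2 * E + s) ^ 2 := by ring
  rw [fanInitialDatum, hsquare, Real.sqrt_sq (by positivity)]
  field_simp
  ring

/-- For `t > 0`, the value
`φ₀(z,t) = (λ/(2a₀t))(a₀t/λ − 2e^{z₀/λ} + √(4e^{(z+z₀)/λ} + (a₀t/λ)²))`
satisfies the quadratic relation
`e^{z/λ} − e^{z₀/λ} = (a₀/λ)(−(a₀/λ)φ₀(1−φ₀)e^{−z₀/λ} t² + (2φ₀−1)t)`,
and `φ₀(z_max(t), t) = 1` whenever `e^{z_max(t)/λ} = e^{z₀/λ} + (a₀/λ)t`. -/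
theorem stmt16 (a₀ lam z₀ : ℝ) (ha₀ : 0 < a₀) (hlam : 0 < lam)
    (φ₀ : ℝ → ℝ → ℝ)
    (hφ₀ : ∀ z t, φ₀ z t = (lam / (2 * a₀ * t)) *
      (a₀ * t / lam - 2 * Real.exp (z₀ / lam) +
        Real.sqrt (4 * Real.exp ((z + z₀) / lam) + (a₀ * t / lam) ^ 2))) :
    ∀ t : ℝ, 0 < t →
      (∀ z : ℝ,
        Real.exp (z / lam) - Real.exp (z₀ / lam) =
          (a₀ / lam) * (-(a₀ / lam) * φ₀ z t * (1 - φ₀ z t) *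
            Real.exp (-z₀ / lam) * t ^ 2 + (2 * φ₀ z t - 1) * t)) ∧
      (∀ zmax : ℝ, Real.exp (zmax / lam) = Real.exp (z₀ / lam) + (a₀ / lam) * t →
        φ₀ zmax t = 1) := by
  intro t ht
  have hs : 0 < a₀ * t / lam := by positivity
  have hφ : ∀ z, φ₀ z t =
      fanInitialDatum (Real.exp (z₀ / lam)) (Real.exp (z / lam)) (a₀ * t / lam) := by
    intro z
    rw [hφ₀, fanInitialDatum, add_div, Real.exp_add]
    field_simp
  refine ⟨fun z => ?_, fun zmax hzmax => ?_⟩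
  · rw [hφ, fanInitialDatum_solves_characteristic (Real.exp_pos _) (Real.exp_pos _).le hs.ne', neg_div,
      Real.exp_neg]
    ring
  · rw [hφ, hzmax, div_mul_eq_mul_div]
    exact fanInitialDatum_add_self (Real.exp_pos _) hs
end
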